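/- arXiv:alg-geom/9505001 — 3 statements merged into one kernel-verified Lean document; each statement's English description precedes it below -/
import Mathlib

section
/- Let v ∈ Sₙ, let 1 ≤ a < b ≤ n with ℓ(v·t_{a,b}) = ℓ(v)+1, and let 1 ≤ p ≤ n with p ∉ {a,b}. Then ℓ((v·t_{a,b})|ₚ) = ℓ(v|ₚ) + 1. -/
open Equiv MvPolynomial

attribute [local instance] Classical.propDecidable

namespace SchubertPieri

/-- Position `j ∈ {1,…,N}` (1-indexed) as an element of `Fin N` (0-indexed). -/
def pos (N : ℕ) [NeZero N] (j : ℕ) : Fin N :=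
  ⟨(j - 1) % N, Nat.mod_lt _ (Nat.pos_of_ne_zero (NeZero.ne N))⟩

/-- The transposition `t_{a,b}` interchanging positions `a` and `b` (1-indexed). -/
def t (N : ℕ) [NeZero N] (a b : ℕ) : Equiv.Perm (Fin N) :=
  Equiv.swap (pos N a) (pos N b)

/-- The value `w(j)` for `j ∈ {1,…,N}` (1-indexed). -/
def val {N : ℕ} [NeZero N] (w : Equiv.Perm (Fin N)) (j : ℕ) : ℕ :=
  (w (pos N j) : ℕ) + 1

/-- The length of `w`: its number of inversions. -/
def len {N : ℕ} (w : Equiv.Perm (Fin N)) : ℕ :=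
  (Finset.univ.filter fun p : Fin N × Fin N => p.1 < p.2 ∧ w p.2 < w p.1).card

/-- The longest permutation `w₀ : j ↦ N+1-j`. -/
def w0 (N : ℕ) : Equiv.Perm (Fin N) :=
  ⟨Fin.rev, Fin.rev, Fin.rev_rev, Fin.rev_rev⟩

/-- The product `t_{a 0, b 0} ⋯ t_{a (i-1), b (i-1)}`. -/
def tProd (N : ℕ) [NeZero N] (a b : ℕ → ℕ) (i : ℕ) : Equiv.Perm (Fin N) :=
  ((List.range i).map fun j => t N (a j) (b j)).prod

/-- `r[k,m] = t_{k,k+1} t_{k,k+2} ⋯ t_{k,k+m}`, the (m+1)-cycle with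
`r[k,m](k) = k+m` and `r[k,m](j) = j-1` for `k+1 ≤ j ≤ k+m`. -/
def rPerm (N k m : ℕ) [NeZero N] : Equiv.Perm (Fin N) :=
  ((List.range m).map fun i => t N k (k + 1 + i)).prod

/-- `c[k,m] = t_{k,k+1} t_{k-1,k+1} ⋯ t_{k-m+1,k+1}`, the (m+1)-cycle with
`c[k,m](j) = j+1` for `k-m+1 ≤ j ≤ k` and `c[k,m](k+1) = k-m+1`. -/
def cPerm (N k m : ℕ) [NeZero N] : Equiv.Perm (Fin N) :=
  ((List.range m).map fun i => t N (k - i) (k + 1)).prod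

/-- The conditions that `aᵢ ≤ k < bᵢ` (with all indices in `{1,…,N}`) and that
`ℓ(w t_{a₁ b₁} ⋯ t_{aᵢ bᵢ}) = ℓ(w) + i` for `1 ≤ i ≤ m`. -/
def StepOK (N k m : ℕ) [NeZero N] (w : Equiv.Perm (Fin N)) (a b : ℕ → ℕ) : Prop :=
  (∀ i, i < m → 1 ≤ a i ∧ a i ≤ k ∧ k < b i ∧ b i ≤ N) ∧
  (∀ i, i ≤ m → len (w * tProd N a b i) = len w + i)

/-- `w →_{r[k,m]} w'`. -/
def RelR (N k m : ℕ) [NeZero N] (w w' : Equiv.Perm (Fin N)) : Prop :=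
  ∃ a b : ℕ → ℕ, StepOK N k m w a b ∧ w' = w * tProd N a b m ∧
    (∀ i j, i < m → j < m → i ≠ j → b i ≠ b j)

/-- `w →_{c[k,m]} w'`. -/
def RelC (N k m : ℕ) [NeZero N] (w w' : Equiv.Perm (Fin N)) : Prop :=
  ∃ a b : ℕ → ℕ, StepOK N k m w a b ∧ w' = w * tProd N a b m ∧
    (∀ i j, i < m → j < m → i ≠ j → a i ≠ a j)

/-- The divided difference operator `∂ᵢ f = (f - sᵢ·f)/(xᵢ - xᵢ₊₁)` (1-indexed `i`);
the quotient is exact, and is recovered here as the (unique) witness of divisibility. -/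
noncomputable def divDiff {N : ℕ} [NeZero N] (i : ℕ) (f : MvPolynomial (Fin N) ℤ) :
    MvPolynomial (Fin N) ℤ :=
  if h : (X (pos N i) - X (pos N (i + 1))) ∣ (f - rename (⇑(t N i (i + 1))) f) then
    h.choose
  else 0

/-- `∂_{a₁} ∘ ⋯ ∘ ∂_{a_p}` applied to `f`, for a word `l = [a₁,…,a_p]`. -/
noncomputable def divDiffWord {N : ℕ} [NeZero N] (l : List ℕ) (f : MvPolynomial (Fin N) ℤ) :
    MvPolynomial (Fin N) ℤ :=
  l.foldr divDiff f

/-- Auxiliary: produce a reduced word for `w` by repeatedly removing a descent. -/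
def redWordAux (N : ℕ) [NeZero N] : ℕ → Equiv.Perm (Fin N) → List ℕ
  | 0, _ => []
  | fuel + 1, w =>
    match ((List.range (N - 1)).map (· + 1)).find? (fun i => decide (val w (i + 1) < val w i)) with
    | none => []
    | some i => redWordAux N fuel (w * t N i (i + 1)) ++ [i]

/-- A canonical reduced word `(a₁,…,a_p)` for `w`, i.e. `w = s_{a₁} ⋯ s_{a_p}` with `p = ℓ(w)`. -/
def redWord (N : ℕ) [NeZero N] (w : Equiv.Perm (Fin N)) : List ℕ :=
  redWordAux N (N * N) w

/-- The staircase monomial `x₁^{N-1} x₂^{N-2} ⋯ x_{N-1}`. -/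
noncomputable def staircase (N : ℕ) : MvPolynomial (Fin N) ℤ :=
  ∏ i : Fin N, X i ^ (N - 1 - (i : ℕ))

/-- The Schubert polynomial `𝔖_w = ∂_{w⁻¹w₀}(x₁^{N-1} ⋯ x_{N-1})`. -/
noncomputable def schubertPoly (N : ℕ) [NeZero N] (w : Equiv.Perm (Fin N)) :
    MvPolynomial (Fin N) ℤ :=
  divDiffWord (redWord N (w⁻¹ * w0 N)) (staircase N)

/-- The ideal of `Rₙ` generated by the symmetric polynomials with zero constant term. -/
noncomputable def symIdeal (N : ℕ) : Ideal (MvPolynomial (Fin N) ℤ) :=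
  Ideal.span {f : MvPolynomial (Fin N) ℤ | f.IsSymmetric ∧ constantCoeff f = 0}

/-- The ring `Hₙ = Rₙ/𝒮`. -/
abbrev HRing (N : ℕ) := MvPolynomial (Fin N) ℤ ⧸ symIdeal N

/-- The class of the Schubert polynomial `𝔖_w` in `Hₙ`. -/
noncomputable def SS (N : ℕ) [NeZero N] (w : Equiv.Perm (Fin N)) : HRing N :=
  Ideal.Quotient.mk (symIdeal N) (schubertPoly N w)

/-- The complete homogeneous symmetric polynomial of degree `m` in `x₁,…,x_k`. -/
noncomputable def hPoly (N k m : ℕ) : MvPolynomial (Fin N) ℤ :=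
  ∑ s ∈ (Finset.univ.filter fun i : Fin N => (i : ℕ) < k).sym m,
    (Multiset.map X (s : Multiset (Fin N))).prod

/-- The elementary symmetric polynomial of degree `m` in `x₁,…,x_k`. -/
noncomputable def ePoly (N k m : ℕ) : MvPolynomial (Fin N) ℤ :=
  ∑ s ∈ (Finset.univ.filter fun i : Fin N => (i : ℕ) < k).powersetCard m, ∏ i ∈ s, X i

/-- Covering relation of the `k`-Bruhat order. -/
def kCover (N k : ℕ) [NeZero N] (w w' : Equiv.Perm (Fin N)) : Prop :=
  ∃ a b : ℕ, 1 ≤ a ∧ a ≤ k ∧ k < b ∧ b ≤ N ∧ w' = w * t N a b ∧ len w' = len w + 1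

/-- The (strict) `k`-Bruhat order `<ₖ`. -/
def kBruhat (N k : ℕ) [NeZero N] : Equiv.Perm (Fin N) → Equiv.Perm (Fin N) → Prop :=
  Relation.TransGen (kCover N k)

/-- The label `w⁽ⁱ⁺¹⁾(a_{i+1})` (0-indexed `i`) of the `(i+1)`-st step of a path. -/
def label {N : ℕ} [NeZero N] (w : Equiv.Perm (Fin N)) (a b : ℕ → ℕ) (i : ℕ) : ℕ :=
  val (w * tProd N a b (i + 1)) (a i)

/-- `(a,b)` encodes a path of length `m` in the `k`-Bruhat order from `w` to `w'`
(normalized so that `a i = b i = 0` for `i ≥ m`, making the encoding unique). -/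
def PathWit (N k m : ℕ) [NeZero N] (w w' : Equiv.Perm (Fin N))
    (ab : (ℕ → ℕ) × (ℕ → ℕ)) : Prop :=
  StepOK N k m w ab.1 ab.2 ∧ w' = w * tProd N ab.1 ab.2 m ∧
    ∀ i, m ≤ i → ab.1 i = 0 ∧ ab.2 i = 0

/-- Paths of length `m` in the `k`-Bruhat order from `w` to `w'` with strictly
increasing labels. -/
def IncPaths (N k m : ℕ) [NeZero N] (w w' : Equiv.Perm (Fin N)) :
    Set ((ℕ → ℕ) × (ℕ → ℕ)) :=
  {ab | PathWit N k m w w' ab ∧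
    ∀ i j, i < j → j < m → label w ab.1 ab.2 i < label w ab.1 ab.2 j}

/-- Paths of length `m` in the `k`-Bruhat order from `w` to `w'` with strictly
decreasing labels. -/
def DecPaths (N k m : ℕ) [NeZero N] (w w' : Equiv.Perm (Fin N)) :
    Set ((ℕ → ℕ) × (ℕ → ℕ)) :=
  {ab | PathWit N k m w w' ab ∧
    ∀ i j, i < j → j < m → label w ab.1 ab.2 j < label w ab.1 ab.2 i}


/-- The cycle `(x₁ x₂ … x_r)` (sending `x₁ ↦ x₂ ↦ ⋯ ↦ x_r ↦ x₁`), as a product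
of transpositions. -/
def cycleList (N : ℕ) [NeZero N] (l : List ℕ) : Equiv.Perm (Fin N) :=
  ((l.zip l.tail).map fun p => t N p.1 p.2).prod

/-- The Grassmannian permutation `h[k;p,q]` of descent `k` and hook shape `(p,1^{q-1})`:
the `(p+q)`-cycle `(k-q+1  k-q+2 … k  k+p  k+p-1 … k+1)`. -/
def hookPerm (N k p q : ℕ) [NeZero N] : Equiv.Perm (Fin N) :=
  cycleList N (((List.range q).map fun i => k - q + 1 + i) ++
    ((List.range p).reverse.map fun i => k + 1 + i))

/-- `w|ₚ ∈ S_{N-1}`: delete row `p` and column `w(p)` from the permutation matrix of `w`. -/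
def drop {N : ℕ} (w : Equiv.Perm (Fin (N + 1))) (p : Fin (N + 1)) : Equiv.Perm (Fin N) :=
  Equiv.removeNone (((finSuccEquiv' p).symm.trans (w : Fin (N + 1) ≃ Fin (N + 1))).trans
    (finSuccEquiv' (w p)))

/-- `lam` is a partition with at most `k` parts (1-indexed parts `lam 1 ≥ lam 2 ≥ ⋯`,
normalized by `lam 0 = 0`). -/
def IsPartFun (k : ℕ) (lam : ℕ → ℕ) : Prop :=
  lam 0 = 0 ∧ (∀ j, 1 ≤ j → lam (j + 1) ≤ lam j) ∧ ∀ j, k < j → lam j = 0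

/-- `h_d(x₁,…,x_k)` for an integer `d`, with `h_d = 0` for `d < 0`. -/
noncomputable def hPolyZ (N k : ℕ) (d : ℤ) : MvPolynomial (Fin N) ℤ :=
  if 0 ≤ d then hPoly N k d.toNat else 0

/-- The Schur polynomial `s_λ(x₁,…,x_k)`, via the Jacobi–Trudi determinant
`det(h_{λᵢ+j-i})_{1 ≤ i,j ≤ k}`. -/
noncomputable def schurPoly (N k : ℕ) (lam : ℕ → ℕ) : MvPolynomial (Fin N) ℤ :=
  (Matrix.of fun i j : Fin k =>
    hPolyZ N k ((lam ((i : ℕ) + 1) : ℤ) + (j : ℕ) - (i : ℕ))).det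

/-- `r_j = #{i : aᵢ = j}` (with `i` ranging over `0,…,m-1`, 0-indexed). -/
def rJ (a : ℕ → ℕ) (m j : ℕ) : ℕ := ((Finset.range m).filter fun i => a i = j).card

/-- `μ_j = r_{j+1} + ⋯ + r_k`. -/
def muJ (a : ℕ → ℕ) (m k j : ℕ) : ℕ :=
  if j = 0 then 0 else ∑ j' ∈ Finset.Icc (j + 1) k, rJ a m j'

/-- `λ_j = μ_j + r_j`. -/
def lamJ (a : ℕ → ℕ) (m k j : ℕ) : ℕ :=
  if j = 0 then 0 else muJ a m k j + rJ a m j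

/-- `d_j = #{i : bᵢ = N+1-j}` (with `i` ranging over `0,…,m-1`, 0-indexed). -/
def dJ (b : ℕ → ℕ) (m N j : ℕ) : ℕ :=
  ((Finset.range m).filter fun i => b i = N + 1 - j).card

/-- `μ′_j = d_{j+1} + ⋯ + d_{N-k}`. -/
def muJ' (b : ℕ → ℕ) (m N k j : ℕ) : ℕ :=
  if j = 0 then 0 else ∑ j' ∈ Finset.Icc (j + 1) (N - k), dJ b m N j'

/-- `λ′_j = μ′_j + d_j`. -/
def lamJ' (b : ℕ → ℕ) (m N k j : ℕ) : ℕ :=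
  if j = 0 then 0 else muJ' b m N k j + dJ b m N j

/-- The conjugate (transpose) partition: `νᵗ_j = #{i : νᵢ ≥ j}`, for `ν` with at
most `k` parts. -/
def conjPart (k : ℕ) (nu : ℕ → ℕ) (j : ℕ) : ℕ :=
  if j = 0 then 0 else ((Finset.Icc 1 k).filter fun i => j ≤ nu i).card

/-- `wv` is the Grassmannian permutation of descent `k` and shape `nu`:
`wv(j) = j + ν_{k+1-j}` for `1 ≤ j ≤ k`, and `wv` is increasing on `{k+1,…,N}`. -/
def IsGrassOf (N k : ℕ) [NeZero N] (nu : ℕ → ℕ) (wv : Equiv.Perm (Fin N)) : Prop :=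
  (∀ j, 1 ≤ j → j ≤ k → val wv j = j + nu (k + 1 - j)) ∧
  (∀ j, k < j → j < N → val wv j < val wv (j + 1))

/-- Paths of length `m` in the `k`-Bruhat order from `w` to `w'` whose labels
increase strictly for the first `p` steps and decrease strictly thereafter
(positions `p, p+1, …, m` being decreasing, 1-indexed). -/
def IncDecPaths (N k m p : ℕ) [NeZero N] (w w' : Equiv.Perm (Fin N)) :
    Set ((ℕ → ℕ) × (ℕ → ℕ)) :=
  {ab | PathWit N k m w w' ab ∧
    (∀ i j, i < j → j < p → label w ab.1 ab.2 i < label w ab.1 ab.2 j) ∧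
    (∀ i j, p - 1 ≤ i → i < j → j < m → label w ab.1 ab.2 j < label w ab.1 ab.2 i)}

/-- Paths of length `m` in the `k`-Bruhat order from `w` to `w'` whose labels
decrease strictly for the first `q` steps and increase strictly thereafter. -/
def DecIncPaths (N k m q : ℕ) [NeZero N] (w w' : Equiv.Perm (Fin N)) :
    Set ((ℕ → ℕ) × (ℕ → ℕ)) :=
  {ab | PathWit N k m w w' ab ∧
    (∀ i j, i < j → j < q → label w ab.1 ab.2 j < label w ab.1 ab.2 i) ∧
    (∀ i j, q - 1 ≤ i → i < j → j < m → label w ab.1 ab.2 i < label w ab.1 ab.2 j)}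

/-!
Deleting row `p` and column `w(p)` removes exactly the inversions of `w` through `p`, so
`ℓ(w) = ℓ(w|ₚ) + #{q : p and q form an inversion of w}`. Comparing inversions of `v` and
`v t_{a,b}`, the length goes up by one only if `v(a) < v(b)` and no `a < q < b` has
`v(a) < v(q) < v(b)` (each such `q` adds two more inversions). Under these two conditions the
swap does not change the number of inversions through any `p ∉ {a, b}`, and the claim follows.
-/

open Finset

section Drop

variable {N : ℕ}

def inversionsAt (w : Perm (Fin N)) (P : Fin N) : ℕ :=
  #{q | (q < P ∧ w P < w q) ∨ (P < q ∧ w q < w P)}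

lemma succAbove_drop_apply (w : Perm (Fin (N + 1))) (P : Fin (N + 1)) (j : Fin N) :
    (w P).succAbove (drop w P j) = w (P.succAbove j) := by
  obtain ⟨i, hi⟩ := Fin.exists_succAbove_eq
    (show w (P.succAbove j) ≠ w P from fun h => Fin.succAbove_ne P j (w.injective h))
  have h : ((finSuccEquiv' P).symm.trans (w : Fin (N + 1) ≃ Fin (N + 1))).trans
      (finSuccEquiv' (w P)) (some j) = some i := by
    simp [finSuccEquiv'_symm_some, ← hi, finSuccEquiv'_succAbove]
  have hdrop : some (drop w P j) = some i := (Equiv.removeNone_some _ ⟨i, h⟩).trans h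
  rw [Option.some_injective _ hdrop, hi]

lemma len_drop_eq_card (w : Perm (Fin (N + 1))) (P : Fin (N + 1)) :
    len (drop w P) = #{p : Fin (N + 1) × Fin (N + 1) |
      (p.1 < p.2 ∧ w p.2 < w p.1) ∧ ¬(p.1 = P ∨ p.2 = P)} := by
  apply card_bij (fun q _ => (P.succAbove q.1, P.succAbove q.2))
  · intro q hq
    simp only [mem_filter, mem_univ, true_and, ← succAbove_drop_apply, not_or,
      Fin.succAbove_lt_succAbove_iff] at hq ⊢
    exact ⟨hq, Fin.succAbove_ne P q.1, Fin.succAbove_ne P q.2⟩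
  · intro q _ q' _ h
    simp only [Prod.mk.injEq, Fin.succAbove_right_inj] at h
    exact Prod.ext h.1 h.2
  · rintro ⟨p₁, p₂⟩ hp
    simp only [mem_filter, mem_univ, true_and, not_or] at hp
    obtain ⟨i, rfl⟩ := Fin.exists_succAbove_eq hp.2.1
    obtain ⟨j, rfl⟩ := Fin.exists_succAbove_eq hp.2.2
    refine ⟨(i, j), ?_, rfl⟩
    simpa only [mem_filter, mem_univ, true_and, ← succAbove_drop_apply,
      Fin.succAbove_lt_succAbove_iff] using hp.1

lemma inversionsAt_eq_card (w : Perm (Fin N)) (P : Fin N) :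
    inversionsAt w P =
      #{p : Fin N × Fin N | (p.1 < p.2 ∧ w p.2 < w p.1) ∧ (p.1 = P ∨ p.2 = P)} := by
  apply card_bij (fun q _ => if q < P then (q, P) else (P, q))
  · intro q hq
    simp only [mem_filter, mem_univ, true_and] at hq ⊢
    rcases hq with h | h
    · simp [h]
    · simp [h, not_lt_of_gt h.1]
  · intro q hq q' hq' h
    simp only [mem_filter, mem_univ, true_and] at hq hq'
    split_ifs at h <;> simp only [Prod.mk.injEq] at h <;> grind
  · intro p hp
    simp only [mem_filter, mem_univ, true_and] at hp
    obtain ⟨⟨hlt, hw⟩, rfl | rfl⟩ := hp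
    · exact ⟨p.2, by simp [hlt, hw], by simp [not_lt_of_gt hlt]⟩
    · exact ⟨p.1, by simp [hlt, hw], by simp [hlt]⟩

lemma len_eq_len_drop_add_inversionsAt (w : Perm (Fin (N + 1))) (P : Fin (N + 1)) :
    len w = len (drop w P) + inversionsAt w P := by
  rw [len_drop_eq_card, inversionsAt_eq_card, len,
    ← card_filter_add_card_filter_not (p := fun p : _ × _ => p.1 = P ∨ p.2 = P),
    filter_filter, filter_filter, add_comm]

end Drop

section Swap

variable {N : ℕ} {A B P : Fin N}

lemma len_mul_eq_card (u σ : Perm (Fin N)) :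
    len (u * σ) = #{p : Fin N × Fin N | σ⁻¹ p.1 < σ⁻¹ p.2 ∧ u p.2 < u p.1} :=
  card_equiv (σ.prodCongr σ) (fun p => by simp only [mem_filter]; simp)

lemma apply_swap_lt_apply_swap {u : Perm (Fin N)} (hAB : A < B) (hu : u A < u B)
    {i j : Fin N} (hij : i < j) (huij : u j < u i) (hs : ¬swap A B i < swap A B j) :
    u (swap A B j) < u (swap A B i) := by
  simp only [swap_apply_def] at hs ⊢
  split_ifs at hs ⊢ <;> subst_vars <;> grind

/-- Read through `swap A B`, the pairs of `E` are inversions of `u * swap A B` that come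
neither from inversions of `u` nor from their images under `swap A B`. -/
lemma len_add_card_le_len_mul_swap {u : Perm (Fin N)} (hAB : A < B) (hu : u A < u B)
    (E : Finset (Fin N × Fin N))
    (hE : ∀ p ∈ E, p.2 < p.1 ∧ swap A B p.1 < swap A B p.2 ∧ u p.2 < u p.1 ∧
      u (swap A B p.1) < u (swap A B p.2)) :
    len u + #E ≤ len (u * swap A B) := by
  set s := swap A B
  set I : Finset (Fin N × Fin N) := {p | p.1 < p.2 ∧ u p.2 < u p.1}
  have memI : ∀ p, p ∈ I ↔ p.1 < p.2 ∧ u p.2 < u p.1 := fun p => by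
    simp only [I, mem_filter]; simp
  have hdisj : Disjoint I E :=
    disjoint_left.2 fun p hpI hpE => lt_asymm ((memI p).1 hpI).1 (hE p hpE).1
  have sorted : ∀ p ∈ I ∪ E, ¬s p.1 < s p.2 → p ∈ I := fun p hp hs =>
    (mem_union.1 hp).resolve_right fun hpE => hs (hE p hpE).2.1
  have key : ∀ p ∈ I ∪ E, ∀ q ∈ I ∪ E,
      s p.1 < s p.2 → ¬s q.1 < s q.2 → p ≠ (s q.1, s q.2) := by
    rintro p hp q hq hps hqs rfl
    have hqI := (memI q).1 (sorted q hq hqs)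
    rcases mem_union.1 hp with hpI | hpE
    · exact hqs ((memI _).1 hpI).1
    · have := (hE _ hpE).2.2.2
      simp only [s, swap_apply_self] at this
      exact lt_asymm this hqI.2
  rw [len, ← card_union_of_disjoint hdisj, len_mul_eq_card, swap_inv]
  refine card_le_card_of_injOn (fun p => if s p.1 < s p.2 then p else (s p.1, s p.2)) ?_ ?_
  · intro p hp
    simp only [mem_coe, mem_filter, mem_univ, true_and]
    split_ifs with hps
    · rcases mem_union.1 hp with hpI | hpE
      · exact ⟨hps, ((memI p).1 hpI).2⟩
      · exact ⟨hps, (hE p hpE).2.2.1⟩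
    · have hpI := (memI p).1 (sorted p hp hps)
      simp only [s, swap_apply_self]
      exact ⟨hpI.1, apply_swap_lt_apply_swap hAB hu hpI.1 hpI.2 hps⟩
  · intro p hp q hq hpq
    simp only at hpq
    split_ifs at hpq with hps hqs hqs
    · exact hpq
    · exact absurd hpq (key p hp q hq hps hqs)
    · exact absurd hpq.symm (key q hq p hp hqs hps)
    · simp only [Prod.mk.injEq, EmbeddingLike.apply_eq_iff_eq] at hpq
      exact Prod.ext hpq.1 hpq.2

lemma len_lt_len_mul_swap {u : Perm (Fin N)} (hAB : A < B) (hu : u A < u B) :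
    len u < len (u * swap A B) := by
  simpa using len_add_card_le_len_mul_swap hAB hu {(B, A)} (by simp [hAB, hu])

lemma len_add_three_le_len_mul_swap {u : Perm (Fin N)} (hAP : A < P) (hPB : P < B)
    (huAP : u A < u P) (huPB : u P < u B) :
    len u + 3 ≤ len (u * swap A B) := by
  have hAB := hAP.trans hPB
  have hsP : swap A B P = P := swap_apply_of_ne_of_ne hAP.ne' hPB.ne
  have hcard : #{(B, A), (B, P), (P, A)} = 3 := by
    rw [card_insert_of_notMem, card_insert_of_notMem, card_singleton] <;>
      simp [hAP.ne, hAP.ne', hPB.ne']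
  have := len_add_card_le_len_mul_swap hAB (huAP.trans huPB) {(B, A), (B, P), (P, A)}
    (by simp [hsP, hAP, hPB, hAB, huAP, huPB, huAP.trans huPB])
  rwa [hcard] at this

lemma apply_lt_apply_of_len_mul_swap {v : Perm (Fin N)} (hAB : A < B)
    (hv : len (v * swap A B) = len v + 1) : v A < v B := by
  by_contra! hle
  have hlt : (v * swap A B) A < (v * swap A B) B := by
    simpa using hle.lt_of_ne (v.injective.ne hAB.ne')
  have := len_lt_len_mul_swap hAB hlt
  rw [mul_swap_mul_self] at this
  omega

lemma not_between_of_len_mul_swap {v : Perm (Fin N)}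
    (hv : len (v * swap A B) = len v + 1) :
    ¬(A < P ∧ P < B ∧ v A < v P ∧ v P < v B) := by
  rintro ⟨hAP, hPB, hvAP, hvPB⟩
  have := len_add_three_le_len_mul_swap hAP hPB hvAP hvPB
  omega

lemma inversionsAt_mul_swap {v : Perm (Fin N)} (hPA : P ≠ A) (hPB : P ≠ B) (hAB : A < B)
    (hv : v A < v B) (hP : ¬(A < P ∧ P < B ∧ v A < v P ∧ v P < v B)) :
    inversionsAt (v * swap A B) P = inversionsAt v P := by
  have eq_sum : ∀ w : Perm (Fin N), inversionsAt w P =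
      ∑ q ∈ {A, B}ᶜ, (if (q < P ∧ w P < w q) ∨ (P < q ∧ w q < w P) then 1 else 0) +
      ∑ q ∈ {A, B}, (if (q < P ∧ w P < w q) ∨ (P < q ∧ w q < w P) then 1 else 0) :=
    fun w => by rw [sum_compl_add_sum, inversionsAt, card_filter]
  rw [eq_sum, eq_sum, sum_pair hAB.ne]
  congr 1
  · refine sum_congr rfl fun q hq => ?_
    simp only [mem_compl, mem_insert, mem_singleton, not_or] at hq
    simp [swap_apply_of_ne_of_ne hq.1 hq.2, swap_apply_of_ne_of_ne hPA hPB]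
  · simp only [Perm.mul_apply, swap_apply_left, swap_apply_right, swap_apply_of_ne_of_ne hPA hPB]
    have := v.injective.ne hPA
    have := v.injective.ne hPB
    split_ifs <;> grind

end Swap

lemma pos_val {N : ℕ} [NeZero N] {j : ℕ} (hj : 1 ≤ j) (hjN : j ≤ N) :
    ((pos N j : Fin N) : ℕ) = j - 1 :=
  Nat.mod_eq_of_lt (by omega)

/-- If `ℓ(v t_{a,b}) = ℓ(v) + 1` and `p ∉ {a,b}`, then
`ℓ((v t_{a,b})|ₚ) = ℓ(v|ₚ) + 1` (here the paper's `n` is `n+2`). -/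
theorem drop_length_succ (n : ℕ) (v : Equiv.Perm (Fin (n + 2))) (a b p : ℕ)
    (ha : 1 ≤ a) (hab : a < b) (hb : b ≤ n + 2)
    (hlen : len (v * t (n + 2) a b) = len v + 1)
    (hp1 : 1 ≤ p) (hpn : p ≤ n + 2) (hpa : p ≠ a) (hpb : p ≠ b) :
    len (drop (v * t (n + 2) a b) (pos (n + 2) p)) =
      len (drop v (pos (n + 2) p)) + 1 := by
  have hA := pos_val (N := n + 2) ha (by omega)
  have hB := pos_val (N := n + 2) (by omega : 1 ≤ b) hb
  have hP := pos_val (N := n + 2) hp1 hpn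
  have hAB : pos (n + 2) a < pos (n + 2) b := by rw [Fin.lt_def, hA, hB]; omega
  have hPA : pos (n + 2) p ≠ pos (n + 2) a := Fin.ne_of_val_ne (by rw [hP, hA]; omega)
  have hPB : pos (n + 2) p ≠ pos (n + 2) b := Fin.ne_of_val_ne (by rw [hP, hB]; omega)
  unfold t at hlen ⊢
  have hinv := inversionsAt_mul_swap hPA hPB hAB (apply_lt_apply_of_len_mul_swap hAB hlen)
    (not_between_of_len_mul_swap hlen)
  have := len_eq_len_drop_add_inversionsAt (v * swap (pos (n + 2) a) (pos (n + 2) b))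
    (pos (n + 2) p)
  have := len_eq_len_drop_add_inversionsAt v (pos (n + 2) p)
  omega

end SchubertPieri
end

section
/- Let V be an n-dimensional complex vector space and k ≤ n a positive integer. Suppose L₁,…,L_k, M are subspaces of V with V = M ⊕ L₁ ⊕ ⋯ ⊕ L_k (internal direct sum) and each L_j nonzero. Let r_j = dim L_j − 1 and m = r₁ + ⋯ + r_k. Then there exist opposite complete flags F• and F′• in V and partitions λ ⊃ μ with at most k parts and λ₁ ≤ n−k, such that λ_j − μ_j = r_j for 1 ≤ j ≤ k, λ/μ is a skew row of length m, and Ω_μ F• ∩ Ω_{λᶜ} F′• = { H ⊂ V : dim H = k and dim(H ∩ L_j) = 1 for 1 ≤ j ≤ k }. -/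
/-!
Order a basis of `V` adapted to `M ⊕ L₁ ⊕ ⋯ ⊕ L_k` block by block. Its initial and final
segments span opposite complete flags `F•` and `F'•` containing `M ⊕ L₁ ⊕ ⋯ ⊕ L_j` and
`L_j ⊕ ⋯ ⊕ L_k` respectively. With `λ_j = r_j + ⋯ + r_k` and `μ_j = λ_{j+1}`, the Schubert
conditions of `Ω_μ F•` and `Ω_{λᶜ} F'•` on a `k`-plane `H` become
`dim (H ∩ (M ⊕ L₁ ⊕ ⋯ ⊕ L_j)) ≥ j` and `dim (H ∩ (L_j ⊕ ⋯ ⊕ L_k)) ≥ k + 1 - j`. These two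
subspaces of `H` meet in `H ∩ L_j`, so `dim (H ∩ L_j) ≥ 1`; since the `H ∩ L_j` are independent
in `H`, all of them are lines. Conversely, the lines `H ∩ L_j` span subspaces of the required
dimensions.
-/

namespace SchubertPieriGeom

/-- `F` is a complete flag in `V`: a chain `F 1 ⊂ F 2 ⊂ ⋯ ⊂ F n = V` of subspaces
with `dim (F i) = i`. -/
def IsCompleteFlag (n : ℕ) {V : Type*} [AddCommGroup V] [Module ℂ V]
    (F : ℕ → Submodule ℂ V) : Prop :=
  (∀ i, i ≤ n → Module.finrank ℂ (F i) = i) ∧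
  (∀ i j, i ≤ j → j ≤ n → F i ≤ F j) ∧ F n = ⊤

/-- Two complete flags are opposite if `F i + F' (n-i) = V` for all `i`. -/
def OppositeFlags (n : ℕ) {V : Type*} [AddCommGroup V] [Module ℂ V]
    (F F' : ℕ → Submodule ℂ V) : Prop :=
  ∀ i, 1 ≤ i → i ≤ n → F i ⊔ F' (n - i) = ⊤

/-- `lam` is a partition with at most `k` parts (1-indexed parts, normalized by
`lam 0 = 0`). -/
def IsPartFun (k : ℕ) (lam : ℕ → ℕ) : Prop :=
  lam 0 = 0 ∧ (∀ j, 1 ≤ j → lam (j + 1) ≤ lam j) ∧ ∀ j, k < j → lam j = 0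

/-- The Schubert variety `Ω_λ F• = {H ∈ G_k V : dim (H ∩ F_{n-k+j-λ_j}) ≥ j}` in the
Grassmannian of `k`-dimensional subspaces of `V`. -/
def Omega (n k : ℕ) {V : Type*} [AddCommGroup V] [Module ℂ V]
    (lam : ℕ → ℕ) (F : ℕ → Submodule ℂ V) : Set (Submodule ℂ V) :=
  {H | Module.finrank ℂ H = k ∧
    ∀ j, 1 ≤ j → j ≤ k → j ≤ Module.finrank ℂ ↥(H ⊓ F (n - k + j - lam j))}

/-- The complementary partition `λᶜ = (n-k-λ_k, …, n-k-λ_1)`. -/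
def complPart (n k : ℕ) (lam : ℕ → ℕ) : ℕ → ℕ :=
  fun j => n - k - lam (k + 1 - j)

open Module Submodule

theorem _root_.IsLowerSet.eq_setOf_val_lt_ncard {n : ℕ} {T : Set (Fin n)} (hT : IsLowerSet T) :
    T = {x : Fin n | (x : ℕ) < T.ncard} := by
  classical
  ext x
  rw [Set.ncard_eq_toFinset_card', ← Set.filter_mem_univ_eq_toFinset, Set.mem_ofPred_eq,
    Fin.lt_card_filter_univ_iff_apply_of_imp _ fun _ _ h hi => hT h hi]

theorem _root_.IsUpperSet.eq_setOf_sub_ncard_le_val {n : ℕ} {T : Set (Fin n)}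
    (hT : IsUpperSet T) : T = {x : Fin n | n - T.ncard ≤ (x : ℕ)} := by
  have hcompl := hT.compl.eq_setOf_val_lt_ncard
  have hcard := Set.ncard_add_ncard_compl T
  rw [Nat.card_eq_fintype_card, Fintype.card_fin] at hcard
  ext x
  have hx := congrArg (x ∈ ·) hcompl
  simp only [Set.mem_compl_iff, Set.mem_ofPred_eq, eq_iff_iff] at hx
  rw [Set.mem_ofPred_eq, ← not_iff_not, hx]
  omega

theorem _root_.Fin.ncard_setOf_val_lt {n t : ℕ} (ht : t ≤ n) :
    {x : Fin n | (x : ℕ) < t}.ncard = t := by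
  classical
  rw [Set.ncard_eq_toFinset_card', Set.toFinset_ofPred, Fin.card_filter_val_lt, min_eq_right ht]

theorem _root_.Fin.ncard_setOf_sub_le_val {n t : ℕ} (ht : t ≤ n) :
    {x : Fin n | n - t ≤ (x : ℕ)}.ncard = t := by
  have hcard := Set.ncard_add_ncard_compl {x : Fin n | n - t ≤ (x : ℕ)}
  rw [Nat.card_eq_fintype_card, Fintype.card_fin, Set.compl_ofPred] at hcard
  simp only [not_le] at hcard
  rw [Fin.ncard_setOf_val_lt (Nat.sub_le n t)] at hcard
  omega

section Lattice

variable {α : Type*} [CompleteLattice α]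

theorem _root_.iSupIndep.extend_bot {ι ι' : Type*} {t : ι' → α} {f : ι' → ι} (ht : iSupIndep t)
    (hf : Function.Injective f) : iSupIndep (Function.extend f t ⊥) := by
  rw [← iSupIndep_ne_bot]
  have hrange : ∀ i : {i // Function.extend f t ⊥ i ≠ ⊥}, ∃ a, f a = i := fun i => by
    by_contra hi
    exact i.2 (Function.extend_apply' _ _ _ hi)
  choose g hg using hrange
  have hg_inj : Function.Injective g := fun i i' h => Subtype.ext (by rw [← hg i, ← hg i', h])
  convert ht.comp hg_inj with i
  rw [Function.comp_apply, ← hg i, hf.extend_apply]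

theorem biSup_Ici_eq_biSup_Icc {f : ℕ → α} {k : ℕ} (hf : ∀ i, k < i → f i = ⊥) (j : ℕ) :
    ⨆ i ∈ Set.Ici j, f i = ⨆ i ∈ Finset.Icc j k, f i := by
  refine le_antisymm (iSup₂_le fun i (hi : j ≤ i) => ?_) (biSup_mono fun i hi => ?_)
  · rcases le_or_gt i k with hik | hki
    · exact le_biSup f (Finset.mem_Icc.2 ⟨hi, hik⟩)
    · rw [hf i hki]; exact bot_le
  · exact (Finset.mem_Icc.1 hi).1

theorem _root_.iSupIndep.biSup_Iic_inf_biSup_Ici [IsModularLattice α] [IsCompactlyGenerated α]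
    {ι : Type*} [LinearOrder ι] {f : ι → α} (hf : iSupIndep f) (j : ι) :
    (⨆ i ∈ Set.Iic j, f i) ⊓ (⨆ i ∈ Set.Ici j, f i) = f j := by
  have hdisj : Disjoint (⨆ i ∈ Set.Iio j, f i) (⨆ i ∈ Set.Ici j, f i) :=
    hf.disjoint_biSup_biSup (Set.disjoint_left.2 fun _ hlt hge => not_le.2 hlt hge)
  rw [← Set.Iio_insert, iSup_insert, sup_inf_assoc_of_le _ (le_biSup f Set.self_mem_Ici),
    hdisj.eq_bot, sup_bot_eq]

end Lattice

section FinrankIndependent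

variable {K V ι : Type*} [DivisionRing K] [AddCommGroup V] [Module K V] [FiniteDimensional K V]

theorem _root_.iSupIndep.finrank_biSup {N : ι → Submodule K V} (hN : iSupIndep N) (s : Finset ι) :
    finrank K ↥(⨆ i ∈ s, N i) = ∑ i ∈ s, finrank K (N i) := by
  classical
  induction s using Finset.induction_on with
  | empty => simp
  | insert a s ha ih =>
    have hdisj : Disjoint (N a) (⨆ i ∈ s, N i) := hN.disjoint_biSup ha
    rw [Finset.iSup_insert, Finset.sum_insert ha, ← ih, ← finrank_sup_add_finrank_inf_eq,
      hdisj.eq_bot, finrank_bot, add_zero]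

theorem _root_.iSupIndep.finrank_biSup_add_finrank_biSup_compl {N : ι → Submodule K V}
    (hN : iSupIndep N) (htop : iSup N = ⊤) (S : Set ι) :
    finrank K ↥(⨆ i ∈ S, N i) + finrank K ↥(⨆ i ∈ Sᶜ, N i) = finrank K V := by
  rw [← finrank_sup_add_finrank_inf_eq, (hN.disjoint_biSup_biSup disjoint_compl_right).eq_bot,
    finrank_bot, add_zero, ← iSup_union, Set.union_compl_self, iSup_univ, htop, finrank_top]

theorem _root_.iSupIndep.finrank_biSup_Iic_add_finrank_biSup_Ici_succ {N : ℕ → Submodule K V}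
    (hN : iSupIndep N) (htop : iSup N = ⊤) (j : ℕ) :
    finrank K ↥(⨆ i ∈ Set.Iic j, N i) + finrank K ↥(⨆ i ∈ Set.Ici (j + 1), N i) =
      finrank K V := by
  rw [Set.Ici_add_one_eq_Ioi, ← Set.compl_Iic, hN.finrank_biSup_add_finrank_biSup_compl htop]

theorem finrank_biSup_inf_eq_card {N : ι → Submodule K V} (hN : iSupIndep N) (H : Submodule K V)
    (s : Finset ι) (hs : ∀ i ∈ s, finrank K ↥(H ⊓ N i) = 1) :
    finrank K ↥(⨆ i ∈ s, H ⊓ N i) = s.card := by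
  rw [(hN.mono fun i => inf_le_right).finrank_biSup, Finset.sum_congr rfl hs, Finset.sum_const,
    smul_eq_mul, mul_one]

theorem finrank_inf_biSup_Iic_add_finrank_inf_biSup_Ici_le [LinearOrder ι] {N : ι → Submodule K V}
    (hN : iSupIndep N) (H : Submodule K V) (j : ι) :
    finrank K ↥(H ⊓ ⨆ i ∈ Set.Iic j, N i) + finrank K ↥(H ⊓ ⨆ i ∈ Set.Ici j, N i) ≤
      finrank K H + finrank K ↥(H ⊓ N j) := by
  rw [← finrank_sup_add_finrank_inf_eq, inf_inf_inf_comm, inf_idem,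
    hN.biSup_Iic_inf_biSup_Ici]
  exact Nat.add_le_add_right (finrank_mono (sup_le inf_le_left inf_le_left)) _

theorem forall_finrank_inf_eq_one_iff {N : ℕ → Submodule K V} (hN : iSupIndep N)
    {H : Submodule K V} {k : ℕ} (hH : finrank K H = k) :
    (∀ j, 1 ≤ j → j ≤ k → finrank K ↥(H ⊓ N j) = 1) ↔
      (∀ j, 1 ≤ j → j ≤ k → j ≤ finrank K ↥(H ⊓ ⨆ i ∈ Set.Iic j, N i)) ∧
      (∀ j, 1 ≤ j → j ≤ k → j ≤ finrank K ↥(H ⊓ ⨆ i ∈ Set.Ici (k + 1 - j), N i)) := by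
  have hmono : ∀ (s : Finset ℕ) (S : Set ℕ), ↑s ⊆ S →
      finrank K ↥(⨆ i ∈ s, H ⊓ N i) ≤ finrank K ↥(H ⊓ ⨆ i ∈ S, N i) := fun s S hsS =>
    finrank_mono (iSup₂_le fun i hi => inf_le_inf_left H (le_biSup N (hsS hi)))
  constructor
  · intro hone
    have hcard : ∀ a b, 1 ≤ a → b ≤ k → finrank K ↥(⨆ i ∈ Finset.Icc a b, H ⊓ N i) = b + 1 - a :=
      fun a b ha hb => by
        rw [finrank_biSup_inf_eq_card hN H _ fun i hi => ?_, Nat.card_Icc]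
        rw [Finset.mem_Icc] at hi
        exact hone i (by omega) (by omega)
    refine ⟨fun j hj hjk => ?_, fun j hj hjk => ?_⟩
    · have := hmono (Finset.Icc 1 j) (Set.Iic j) fun i hi => (Finset.mem_Icc.1 hi).2
      rw [hcard 1 j le_rfl hjk] at this
      omega
    · have := hmono (Finset.Icc (k + 1 - j) k) (Set.Ici (k + 1 - j)) fun i hi =>
        (Finset.mem_Icc.1 hi).1
      rw [hcard (k + 1 - j) k (by omega) le_rfl] at this
      omega
  · rintro ⟨hlow, hup⟩
    have hpos : ∀ j ∈ Finset.Icc 1 k, 1 ≤ finrank K ↥(H ⊓ N j) := fun j hj => by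
      rw [Finset.mem_Icc] at hj
      have hdim := finrank_inf_biSup_Iic_add_finrank_inf_biSup_Ici_le hN H j
      have hl := hlow j hj.1 hj.2
      have hu := hup (k + 1 - j) (by omega) (by omega)
      rw [show k + 1 - (k + 1 - j) = j by omega] at hu
      omega
    have hsum : ∑ j ∈ Finset.Icc 1 k, finrank K ↥(H ⊓ N j) ≤ ∑ j ∈ Finset.Icc 1 k, 1 := by
      rw [← (hN.mono fun i => inf_le_right).finrank_biSup]
      calc finrank K ↥(⨆ i ∈ Finset.Icc 1 k, H ⊓ N i) ≤ finrank K H :=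
            finrank_mono (iSup₂_le fun _ _ => inf_le_left)
        _ = ∑ j ∈ Finset.Icc 1 k, 1 := by simp [hH]
    intro j hj hjk
    exact ((Finset.sum_eq_sum_iff_of_le hpos).1 (le_antisymm (Finset.sum_le_sum hpos) hsum)
      j (Finset.mem_Icc.2 ⟨hj, hjk⟩)).symm

end FinrankIndependent

theorem _root_.Module.Basis.finrank_span_image {K V ι : Type*} [DivisionRing K] [AddCommGroup V]
    [Module K V] (b : Basis ι K V) (T : Set ι) [Finite T] :
    finrank K (span K (b '' T)) = T.ncard := by
  have := Fintype.ofFinite T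
  rw [Set.image_eq_range, ← Nat.card_coe_set_eq, Nat.card_eq_fintype_card]
  exact finrank_span_eq_card (b.linearIndependent.comp _ Subtype.val_injective)

theorem _root_.DirectSum.IsInternal.span_collectedBasis_image {R M ι : Type*} [Ring R]
    [AddCommGroup M] [Module R M] [DecidableEq ι] {A : ι → Submodule R M}
    (h : DirectSum.IsInternal A) {α : ι → Type*} (v : ∀ i, Basis (α i) R (A i)) (S : Set ι) :
    span R (h.collectedBasis v '' {p | p.1 ∈ S}) = ⨆ i ∈ S, A i := by
  refine le_antisymm (span_le.2 ?_) (iSup₂_le fun i hi => ?_)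
  · rintro _ ⟨p, hp, rfl⟩
    exact le_biSup A hp (h.collectedBasis_mem v p)
  · calc A i = (span R (Set.range (v i))).map (A i).subtype := by
          rw [(v i).span_eq, map_subtype_top]
      _ = span R (Set.range fun a => h.collectedBasis v ⟨i, a⟩) := by
          rw [map_span, ← Set.range_comp, h.collectedBasis_coe]; rfl
      _ ≤ span R (h.collectedBasis v '' {p | p.1 ∈ S}) :=
          span_mono (Set.range_subset_iff.2 fun a => ⟨⟨i, a⟩, hi, rfl⟩)

theorem _root_.DirectSum.IsInternal.exists_basis_monotone {K V ι : Type*} [DivisionRing K]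
    [AddCommGroup V] [Module K V] [FiniteDimensional K V] [LinearOrder ι]
    {N : ι → Submodule K V} (h : DirectSum.IsInternal N) :
    ∃ (b : Basis (Fin (finrank K V)) K V) (blk : Fin (finrank K V) → ι), Monotone blk ∧
      ∀ S : Set ι, span K (b '' (blk ⁻¹' S)) = ⨆ i ∈ S, N i := by
  let c := h.collectedBasis fun i => finBasis K (N i)
  have : Finite (Σₗ i, Fin (finrank K (N i))) := Module.Finite.finite_basis c
  have := Fintype.ofFinite (Σₗ i, Fin (finrank K (N i)))
  have hcard : Fintype.card (Σₗ i, Fin (finrank K (N i))) = finrank K V := by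
    rw [finrank_eq_nat_card_basis c, ← Nat.card_eq_fintype_card]; rfl
  let e := Fintype.orderIsoFinOfCardEq _ hcard
  let g : Fin (finrank K V) ≃ Σ i, Fin (finrank K (N i)) := e.toEquiv.trans ofLex
  refine ⟨c.reindex g.symm, fun x => (g x).1, fun x y hxy => ?_, fun S => ?_⟩
  · rcases Sigma.Lex.le_def.1 (e.monotone hxy) with hlt | ⟨heq, -⟩
    exacts [hlt.le, heq.le]
  · rw [Basis.coe_reindex, Equiv.symm_symm, Set.image_comp]
    change span K (c '' (g '' (g ⁻¹' {p | p.1 ∈ S}))) = _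
    rw [g.image_preimage]
    exact h.span_collectedBasis_image _ S

section BasisFlag

variable {V : Type*} [AddCommGroup V] [Module ℂ V] {n : ℕ} (b : Basis (Fin n) ℂ V)

def lowerFlag (t : ℕ) : Submodule ℂ V := span ℂ (b '' {x | (x : ℕ) < t})

def upperFlag (t : ℕ) : Submodule ℂ V := span ℂ (b '' {x | n - t ≤ (x : ℕ)})

theorem lowerFlag_finrank_span_image {T : Set (Fin n)} (hT : IsLowerSet T) :
    lowerFlag b (finrank ℂ (span ℂ (b '' T))) = span ℂ (b '' T) := by
  rw [lowerFlag, b.finrank_span_image, ← hT.eq_setOf_val_lt_ncard]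

theorem upperFlag_finrank_span_image {T : Set (Fin n)} (hT : IsUpperSet T) :
    upperFlag b (finrank ℂ (span ℂ (b '' T))) = span ℂ (b '' T) := by
  rw [upperFlag, b.finrank_span_image, ← hT.eq_setOf_sub_ncard_le_val]

theorem isCompleteFlag_lowerFlag : IsCompleteFlag n (lowerFlag b) := by
  refine ⟨fun i hi => ?_, fun i j hij _ => ?_, ?_⟩
  · rw [lowerFlag, b.finrank_span_image, Fin.ncard_setOf_val_lt hi]
  · exact span_mono (Set.image_mono fun x hx => lt_of_lt_of_le hx hij)
  · rw [lowerFlag, show {x : Fin n | (x : ℕ) < n} = Set.univ from Set.eq_univ_of_forall Fin.isLt,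
      Set.image_univ, b.span_eq]

theorem isCompleteFlag_upperFlag : IsCompleteFlag n (upperFlag b) := by
  refine ⟨fun i hi => ?_, fun i j hij _ => ?_, ?_⟩
  · rw [upperFlag, b.finrank_span_image, Fin.ncard_setOf_sub_le_val hi]
  · exact span_mono (Set.image_mono fun x (hx : n - i ≤ x) => by dsimp; omega)
  · rw [upperFlag, show {x : Fin n | n - n ≤ (x : ℕ)} = Set.univ by simp, Set.image_univ,
      b.span_eq]

theorem oppositeFlags_lowerFlag_upperFlag : OppositeFlags n (lowerFlag b) (upperFlag b) := by
  intro i _ hin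
  have hcover : {x : Fin n | (x : ℕ) < i} ∪ {x | n - (n - i) ≤ (x : ℕ)} = Set.univ :=
    Set.eq_univ_of_forall fun x => by simp only [Set.mem_union, Set.mem_ofPred_eq]; omega
  rw [lowerFlag, upperFlag, ← span_union, ← Set.image_union, hcover, Set.image_univ, b.span_eq]

end BasisFlag

theorem exists_oppositeFlags_adapted {V ι : Type*} [AddCommGroup V] [Module ℂ V]
    [FiniteDimensional ℂ V] [LinearOrder ι] {N : ι → Submodule ℂ V}
    (h : DirectSum.IsInternal N) :
    ∃ F F' : ℕ → Submodule ℂ V, IsCompleteFlag (finrank ℂ V) F ∧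
      IsCompleteFlag (finrank ℂ V) F' ∧ OppositeFlags (finrank ℂ V) F F' ∧
      (∀ S : Set ι, IsLowerSet S → F (finrank ℂ ↥(⨆ i ∈ S, N i)) = ⨆ i ∈ S, N i) ∧
      (∀ S : Set ι, IsUpperSet S → F' (finrank ℂ ↥(⨆ i ∈ S, N i)) = ⨆ i ∈ S, N i) := by
  obtain ⟨b, blk, hblk, hspan⟩ := h.exists_basis_monotone
  refine ⟨lowerFlag b, upperFlag b, isCompleteFlag_lowerFlag b, isCompleteFlag_upperFlag b,
    oppositeFlags_lowerFlag_upperFlag b, fun S hS => ?_, fun S hS => ?_⟩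
  · rw [← hspan, lowerFlag_finrank_span_image b (hS.preimage hblk)]
  · rw [← hspan, upperFlag_finrank_span_image b (hS.preimage hblk)]

section Omega

variable {V : Type*} [AddCommGroup V] [Module ℂ V] {n k : ℕ}

theorem omega_eq_of_flag_eq {lam : ℕ → ℕ} {F W : ℕ → Submodule ℂ V}
    (hF : ∀ j, 1 ≤ j → j ≤ k → F (n - k + j - lam j) = W j) :
    Omega n k lam F =
      {H : Submodule ℂ V | finrank ℂ H = k ∧ ∀ j, 1 ≤ j → j ≤ k → j ≤ finrank ℂ ↥(H ⊓ W j)} :=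
  Set.ext fun _ => and_congr_right fun _ => forall₃_congr fun j hj hjk => by rw [hF j hj hjk]

theorem omega_inter_omega_eq [FiniteDimensional ℂ V] {N : ℕ → Submodule ℂ V} (hN : iSupIndep N)
    {mu lamc : ℕ → ℕ} {F F' : ℕ → Submodule ℂ V}
    (hF : ∀ j, 1 ≤ j → j ≤ k → F (n - k + j - mu j) = ⨆ i ∈ Set.Iic j, N i)
    (hF' : ∀ j, 1 ≤ j → j ≤ k → F' (n - k + j - lamc j) = ⨆ i ∈ Set.Ici (k + 1 - j), N i) :
    Omega n k mu F ∩ Omega n k lamc F' =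
      {H : Submodule ℂ V | finrank ℂ H = k ∧ ∀ j, 1 ≤ j → j ≤ k → finrank ℂ ↥(H ⊓ N j) = 1} := by
  rw [omega_eq_of_flag_eq hF, omega_eq_of_flag_eq hF']
  ext H
  simp only [Set.mem_inter_iff, Set.mem_ofPred_eq]
  constructor
  · rintro ⟨⟨hH, hlow⟩, -, hup⟩
    exact ⟨hH, (forall_finrank_inf_eq_one_iff hN hH).2 ⟨hlow, hup⟩⟩
  · rintro ⟨hH, hone⟩
    obtain ⟨hlow, hup⟩ := (forall_finrank_inf_eq_one_iff hN hH).1 hone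
    exact ⟨⟨hH, hlow⟩, hH, hup⟩

end Omega

section TailPartition

def tailPartition (r : ℕ → ℕ) (k s j : ℕ) : ℕ :=
  if j = 0 then 0 else ∑ t ∈ Finset.Icc (j + s) k, r t

variable (r : ℕ → ℕ) (k : ℕ)

theorem tailPartition_antitone (s : ℕ) {i j : ℕ} (hi : 1 ≤ i) (hij : i ≤ j) :
    tailPartition r k s j ≤ tailPartition r k s i := by
  rw [tailPartition, tailPartition, if_neg (by omega), if_neg (by omega)]
  exact Finset.sum_le_sum_of_subset (Finset.Icc_subset_Icc (by omega) le_rfl)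

theorem isPartFun_tailPartition (s : ℕ) : IsPartFun k (tailPartition r k s) := by
  refine ⟨if_pos rfl, fun j hj => tailPartition_antitone r k s hj (Nat.le_succ j), fun j hj => ?_⟩
  rw [tailPartition, if_neg (by omega), Finset.Icc_eq_empty (by omega), Finset.sum_empty]

theorem tailPartition_one_le_zero (j : ℕ) : tailPartition r k 1 j ≤ tailPartition r k 0 j := by
  unfold tailPartition
  split_ifs
  exacts [le_rfl, Finset.sum_le_sum_of_subset (Finset.Icc_subset_Icc (by omega) le_rfl)]

theorem tailPartition_zero_eq {j : ℕ} (hj : 1 ≤ j) (hjk : j ≤ k) :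
    tailPartition r k 0 j = tailPartition r k 1 j + r j := by
  rw [tailPartition, tailPartition, if_neg (by omega), if_neg (by omega), add_zero,
    ← Finset.insert_Icc_add_one_left_eq_Icc hjk, Finset.sum_insert (by simp), add_comm]

theorem tailPartition_zero_succ {j : ℕ} (hj : 1 ≤ j) :
    tailPartition r k 0 (j + 1) = tailPartition r k 1 j := by
  rw [tailPartition, tailPartition, if_neg (by omega), if_neg (by omega)]

end TailPartition

section Blocks

variable {V : Type*} [AddCommGroup V] [Module ℂ V]

noncomputable def natBlocks (M : Submodule ℂ V) (L : ℕ → Submodule ℂ V) (k : ℕ) :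
    ℕ → Submodule ℂ V :=
  Function.extend Fin.val (Fin.cons M fun j : Fin k => L (j + 1) : Fin (k + 1) → _) ⊥

variable {n k : ℕ} {M : Submodule ℂ V} {L : ℕ → Submodule ℂ V}

theorem natBlocks_of_le {j : ℕ} (hj : 1 ≤ j) (hjk : j ≤ k) : natBlocks M L k j = L j := by
  obtain ⟨i, rfl⟩ := Nat.exists_eq_add_of_le' hj
  rw [natBlocks, show i + 1 = ((Fin.succ ⟨i, by omega⟩ : Fin (k + 1)) : ℕ) from rfl,
    Fin.val_injective.extend_apply, Fin.cons_succ]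
  rfl

theorem natBlocks_of_lt {j : ℕ} (hkj : k < j) : natBlocks M L k j = ⊥ :=
  Function.extend_apply' _ _ _ fun ⟨i, hi⟩ => by omega

theorem isInternal_natBlocks
    (h : DirectSum.IsInternal (Fin.cons M fun j : Fin k => L (j + 1) : Fin (k + 1) → _)) :
    DirectSum.IsInternal (natBlocks M L k) :=
  (DirectSum.isInternal_submodule_iff_iSupIndep_and_iSup_eq_top _).2
    ⟨h.submodule_iSupIndep.extend_bot Fin.val_injective,
      (iSup_extend_bot Fin.val_injective _).trans h.submodule_iSup_eq_top⟩

theorem finrank_biSup_Ici_natBlocks [FiniteDimensional ℂ V] (hN : iSupIndep (natBlocks M L k))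
    (hL : ∀ j, 1 ≤ j → j ≤ k → L j ≠ ⊥) {j : ℕ} (hj : 1 ≤ j) :
    finrank ℂ ↥(⨆ i ∈ Set.Ici j, natBlocks M L k i) =
      tailPartition (fun t => finrank ℂ (L t) - 1) k 0 j + (k + 1 - j) := by
  rw [biSup_Ici_eq_biSup_Icc (fun _ => natBlocks_of_lt) j, hN.finrank_biSup, tailPartition,
    if_neg (by omega), add_zero, ← Nat.card_Icc, Finset.card_eq_sum_ones,
    ← Finset.sum_add_distrib]
  refine Finset.sum_congr rfl fun t ht => ?_
  rw [Finset.mem_Icc] at ht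
  have hpos : finrank ℂ (L t) ≠ 0 := fun h0 => hL t (by omega) ht.2 (finrank_eq_zero.1 h0)
  rw [natBlocks_of_le (by omega) ht.2]
  omega

theorem tailPartition_zero_one_add_le [FiniteDimensional ℂ V]
    (hN : DirectSum.IsInternal (natBlocks M L k))
    (hL : ∀ j, 1 ≤ j → j ≤ k → L j ≠ ⊥) (hdim : finrank ℂ V = n) :
    tailPartition (fun t => finrank ℂ (L t) - 1) k 0 1 + k ≤ n := by
  have hsplit := hN.submodule_iSupIndep.finrank_biSup_Iic_add_finrank_biSup_Ici_succ
    hN.submodule_iSup_eq_top 0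
  rw [finrank_biSup_Ici_natBlocks hN.submodule_iSupIndep hL le_rfl] at hsplit
  omega

theorem exists_flags_natBlocks [FiniteDimensional ℂ V] (hN : DirectSum.IsInternal (natBlocks M L k))
    (hL : ∀ j, 1 ≤ j → j ≤ k → L j ≠ ⊥) (hdim : finrank ℂ V = n) :
    ∃ F F' : ℕ → Submodule ℂ V, IsCompleteFlag n F ∧ IsCompleteFlag n F' ∧
      OppositeFlags n F F' ∧
      (∀ j, 1 ≤ j → j ≤ k → F (n - k + j - tailPartition (fun t => finrank ℂ (L t) - 1) k 1 j) =
        ⨆ i ∈ Set.Iic j, natBlocks M L k i) ∧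
      (∀ j, 1 ≤ j → j ≤ k →
        F' (n - k + j - complPart n k (tailPartition (fun t => finrank ℂ (L t) - 1) k 0) j) =
          ⨆ i ∈ Set.Ici (k + 1 - j), natBlocks M L k i) := by
  obtain ⟨F, F', hF, hF', hopp, hlow, hup⟩ := exists_oppositeFlags_adapted hN
  subst hdim
  refine ⟨F, F', hF, hF', hopp, fun j hj hjk => ?_, fun j hj hjk => ?_⟩
  · have hsplit := hN.submodule_iSupIndep.finrank_biSup_Iic_add_finrank_biSup_Ici_succ
      hN.submodule_iSup_eq_top j
    rw [finrank_biSup_Ici_natBlocks hN.submodule_iSupIndep hL (by omega),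
      tailPartition_zero_succ _ _ hj] at hsplit
    -- in particular `k ≤ n`, so `n - k` below does not truncate
    have hlam1 := tailPartition_zero_one_add_le hN hL rfl
    rw [← hlow _ (isLowerSet_Iic j)]
    congr 1
    omega
  · have hIci := finrank_biSup_Ici_natBlocks hN.submodule_iSupIndep hL (j := k + 1 - j) (by omega)
    have hanti := tailPartition_antitone (fun t => finrank ℂ (L t) - 1) k 0 le_rfl
      (show 1 ≤ k + 1 - j by omega)
    have hlam1 := tailPartition_zero_one_add_le hN hL rfl
    rw [← hup _ (isUpperSet_Ici (k + 1 - j)), complPart]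
    congr 1
    omega

end Blocks

theorem grassmannian_intersection_general (n k : ℕ)
    (V : Type*) [AddCommGroup V] [Module ℂ V] [FiniteDimensional ℂ V]
    (hdim : Module.finrank ℂ V = n)
    (L : ℕ → Submodule ℂ V) (M : Submodule ℂ V)
    (hinternal : DirectSum.IsInternal
      (Fin.cons M (fun j : Fin k => L ((j : ℕ) + 1)) : Fin (k + 1) → Submodule ℂ V))
    (hL : ∀ j, 1 ≤ j → j ≤ k → L j ≠ ⊥) :
    ∃ F F' : ℕ → Submodule ℂ V, IsCompleteFlag n F ∧ IsCompleteFlag n F' ∧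
      OppositeFlags n F F' ∧
      ∃ lam mu : ℕ → ℕ, IsPartFun k lam ∧ IsPartFun k mu ∧
        lam 1 ≤ n - k ∧ (∀ j, mu j ≤ lam j) ∧
        (∀ j, 1 ≤ j → j ≤ k → lam j = mu j + (Module.finrank ℂ (L j) - 1)) ∧
        (∀ j, 1 ≤ j → lam (j + 1) ≤ mu j) ∧
        (∑ j ∈ Finset.Icc 1 k, (lam j - mu j)) =
          ∑ j ∈ Finset.Icc 1 k, (Module.finrank ℂ (L j) - 1) ∧
        Omega n k mu F ∩ Omega n k (complPart n k lam) F' =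
          {H : Submodule ℂ V | Module.finrank ℂ H = k ∧
            ∀ j, 1 ≤ j → j ≤ k → Module.finrank ℂ ↥(H ⊓ L j) = 1} := by
  have hN := isInternal_natBlocks hinternal
  obtain ⟨F, F', hF, hF', hopp, hFmu, hF'lam⟩ := exists_flags_natBlocks hN hL hdim
  set r := fun t => finrank ℂ (L t) - 1
  refine ⟨F, F', hF, hF', hopp, tailPartition r k 0, tailPartition r k 1,
    isPartFun_tailPartition r k 0, isPartFun_tailPartition r k 1,
    Nat.le_sub_of_add_le (tailPartition_zero_one_add_le hN hL hdim), tailPartition_one_le_zero r k,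
    fun j hj hjk => tailPartition_zero_eq r k hj hjk,
    fun j hj => (tailPartition_zero_succ r k hj).le, Finset.sum_congr rfl fun j hj => ?_, ?_⟩
  · rw [Finset.mem_Icc] at hj
    rw [tailPartition_zero_eq r k hj.1 hj.2, Nat.add_sub_cancel_left]
  · rw [omega_inter_omega_eq hN.submodule_iSupIndep hFmu hF'lam]
    exact Set.ext fun H => and_congr_right fun _ =>
      forall₃_congr fun j hj hjk => by rw [natBlocks_of_le hj hjk]

/-- If `V = M ⊕ L₁ ⊕ ⋯ ⊕ L_k` with each `L_j ≠ 0`, `r_j = dim L_j - 1` and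
`m = r₁ + ⋯ + r_k`, then there are opposite complete flags `F•`, `F'•` and
partitions `λ ⊃ μ` with at most `k` parts and `λ₁ ≤ n-k`, with `λ_j - μ_j = r_j`
and `λ/μ` a skew row of length `m`, such that `Ω_μ F• ∩ Ω_{λᶜ} F'•` is the set of
`k`-planes meeting every `L_j` in dimension `1`. -/
theorem grassmannian_intersection (n k : ℕ) (hk : 1 ≤ k) (hkn : k ≤ n)
    (V : Type*) [AddCommGroup V] [Module ℂ V] [FiniteDimensional ℂ V]
    (hdim : Module.finrank ℂ V = n)
    (L : ℕ → Submodule ℂ V) (M : Submodule ℂ V)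
    (hinternal : DirectSum.IsInternal
      (Fin.cons M (fun j : Fin k => L ((j : ℕ) + 1)) : Fin (k + 1) → Submodule ℂ V))
    (hL : ∀ j, 1 ≤ j → j ≤ k → L j ≠ ⊥) :
    ∃ F F' : ℕ → Submodule ℂ V, IsCompleteFlag n F ∧ IsCompleteFlag n F' ∧
      OppositeFlags n F F' ∧
      ∃ lam mu : ℕ → ℕ, IsPartFun k lam ∧ IsPartFun k mu ∧
        lam 1 ≤ n - k ∧ (∀ j, mu j ≤ lam j) ∧
        (∀ j, 1 ≤ j → j ≤ k → lam j = mu j + (Module.finrank ℂ (L j) - 1)) ∧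
        (∀ j, 1 ≤ j → lam (j + 1) ≤ mu j) ∧
        (∑ j ∈ Finset.Icc 1 k, (lam j - mu j)) =
          ∑ j ∈ Finset.Icc 1 k, (Module.finrank ℂ (L j) - 1) ∧
        Omega n k mu F ∩ Omega n k (complPart n k lam) F' =
          {H : Submodule ℂ V | Module.finrank ℂ H = k ∧
            ∀ j, 1 ≤ j → j ≤ k → Module.finrank ℂ ↥(H ⊓ L j) = 1} :=
  grassmannian_intersection_general n k V hdim L M hinternal hL

end SchubertPieriGeom
end

section
/- Let w, w′ ∈ Sₙ and k, m positive integers with w →_{r[k,m]} w′. Then the set of transpositions used and the set of intermediate values are independent of the chosen witnessing sequence: for any two sequences a₁,b₁,…,a_m,b_m and a′₁,b′₁,…,a′_m,b′_m, each satisfying aᵢ ≤ k < bᵢ (resp. a′ᵢ ≤ k < b′ᵢ), w′ = w·t_{a₁,b₁}⋯t_{a_m,b_m} (resp. with the primed indices) and ℓ(w·t_{a₁,b₁}⋯t_{aᵢ,bᵢ}) = ℓ(w)+i for 1 ≤ i ≤ m (resp. with the primed indices), the sets of pairs {(a₁,b₁),…,(a_m,b_m)} and {(a′₁,b′₁),…,(a′_m,b′_m)}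 are equal, and the sets of values {(w·t_{a₁,b₁}⋯t_{aᵢ,bᵢ})(aᵢ) : 1 ≤ i ≤ m} and {(w·t_{a′₁,b′₁}⋯t_{a′ᵢ,b′ᵢ})(a′ᵢ) : 1 ≤ i ≤ m} are equal. -/
open Equiv MvPolynomial

attribute [local instance] Classical.propDecidable

namespace SchubertPieri

/-!
Each step swaps a position `≤ k` with a position `> k`. In the witness of `w →_{r[k,m]} w'` the
right-hand positions `bᵢ` are distinct, so each of them is touched exactly once and `w'` differs
from `w` at exactly `m` positions `> k`. Any other witness must reach all of these positions in
its `m` steps, so its `bᵢ` are distinct too and form the same set. When the right-hand positions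
are distinct, step `i` moves `w(bᵢ)` to `aᵢ` (so the label of step `i` is `w(bᵢ)`) and `w'(bᵢ)`
is the value at `aᵢ` just before step `i`: either `w(aᵢ)` or `w(bⱼ)` for the previous step `j`
at `aᵢ`. Following this recursion backwards recovers `aᵢ` from `bᵢ`, `w` and `w'` alone.
-/

section SwapChain

variable {α : Type*}

def IsCrossingChain (S : Set α) (m : ℕ) (A B : ℕ → α) : Prop :=
  ∀ i < m, A i ∈ S ∧ B i ∉ S

lemma IsCrossingChain.left_ne_right {S : Set α} {m : ℕ} {A B A' B' : ℕ → α}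
    (h : IsCrossingChain S m A B) (h' : IsCrossingChain S m A' B') {i j : ℕ}
    (hi : i < m) (hj : j < m) : A i ≠ B' j :=
  fun hij => (h' j hj).2 (hij ▸ (h i hi).1)

variable [DecidableEq α]

def swapProd (A B : ℕ → α) (i : ℕ) : Perm α :=
  ((List.range i).map fun j => swap (A j) (B j)).prod

@[simp]
lemma swapProd_zero (A B : ℕ → α) : swapProd A B 0 = 1 := by
  simp [swapProd]

lemma swapProd_succ (A B : ℕ → α) (i : ℕ) :
    swapProd A B (i + 1) = swapProd A B i * swap (A i) (B i) := by
  simp [swapProd, List.range_succ]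

lemma mul_swapProd_succ_apply (w : Perm α) (A B : ℕ → α) (i : ℕ) (x : α) :
    (w * swapProd A B (i + 1)) x = (w * swapProd A B i) (swap (A i) (B i) x) := by
  rw [swapProd_succ, ← mul_assoc, Perm.mul_apply]

lemma mul_swapProd_apply_of_forall_ne (w : Perm α) {A B : ℕ → α} {i₁ i₂ : ℕ} (h : i₁ ≤ i₂)
    {x : α} (hx : ∀ j, i₁ ≤ j → j < i₂ → A j ≠ x ∧ B j ≠ x) :
    (w * swapProd A B i₂) x = (w * swapProd A B i₁) x := by
  induction i₂, h using Nat.le_induction with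
  | base => rfl
  | succ i₂ h ih =>
    obtain ⟨hA, hB⟩ := hx i₂ h i₂.lt_succ_self
    rw [mul_swapProd_succ_apply, swap_apply_of_ne_of_ne hA.symm hB.symm]
    exact ih fun j h₁ h₂ => hx j h₁ (by omega)

namespace IsCrossingChain

variable {S : Set α} {m : ℕ} {A B A' B' : ℕ → α} {w : Perm α}

lemma mul_swapProd_apply_right (h : IsCrossingChain S m A B) (hB : Set.InjOn B (Set.Iio m))
    {i : ℕ} (hi : i < m) :
    (w * swapProd A B i) (B i) = w (B i) := by
  rw [mul_swapProd_apply_of_forall_ne w i.zero_le fun j _ hj =>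
    ⟨h.left_ne_right h (hj.trans hi) hi, fun hji => hj.ne (hB (hj.trans hi) hi hji)⟩,
    swapProd_zero, mul_one]

lemma mul_swapProd_succ_apply_left (h : IsCrossingChain S m A B) (hB : Set.InjOn B (Set.Iio m))
    {i : ℕ} (hi : i < m) :
    (w * swapProd A B (i + 1)) (A i) = w (B i) := by
  rw [mul_swapProd_succ_apply, swap_apply_left, h.mul_swapProd_apply_right hB hi]

lemma mul_swapProd_final_apply_right (h : IsCrossingChain S m A B) (hB : Set.InjOn B (Set.Iio m))
    {i : ℕ} (hi : i < m) :
    (w * swapProd A B m) (B i) = (w * swapProd A B i) (A i) := by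
  rw [mul_swapProd_apply_of_forall_ne w hi fun j hj hjm =>
    ⟨h.left_ne_right h hjm hi, fun hji => by have := hB hjm hi hji; omega⟩,
    mul_swapProd_succ_apply, swap_apply_right]

lemma mul_swapProd_apply_of_mem (h : IsCrossingChain S m A B) (hB : Set.InjOn B (Set.Iio m))
    {i : ℕ} (hi : i ≤ m) {x : α} (hx : x ∈ S) :
    (w * swapProd A B i) x = w x ∨ ∃ j < i, A j = x ∧ (w * swapProd A B i) x = w (B j) := by
  induction i with
  | zero => simp
  | succ i ih =>
    by_cases hAx : A i = x
    · exact Or.inr ⟨i, i.lt_succ_self, hAx, hAx ▸ h.mul_swapProd_succ_apply_left hB hi⟩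
    have hBx : B i ≠ x := fun hBx => (h i hi).2 (hBx ▸ hx)
    rw [mul_swapProd_succ_apply, swap_apply_of_ne_of_ne (Ne.symm hAx) (Ne.symm hBx)]
    rcases ih (by omega) with hx' | ⟨j, hj, hjx, hx'⟩
    · exact Or.inl hx'
    · exact Or.inr ⟨j, hj.trans i.lt_succ_self, hjx, hx'⟩

lemma filter_subset_image [Fintype α] (h : IsCrossingChain S m A B) :
    Finset.univ.filter (fun x => x ∉ S ∧ (w * swapProd A B m) x ≠ w x) ⊆
      (Finset.range m).image B := by
  intro x hx
  simp only [Finset.mem_filter, Finset.mem_univ, true_and] at hx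
  by_contra hxB
  simp only [Finset.mem_image, Finset.mem_range, not_exists, not_and] at hxB
  refine hx.2 ?_
  rw [mul_swapProd_apply_of_forall_ne (A := A) (B := B) (x := x) w m.zero_le fun j _ hj =>
    ⟨fun hjx => hx.1 (hjx ▸ (h j hj).1), hxB j hj⟩, swapProd_zero, mul_one]

lemma image_subset_filter [Fintype α] (h : IsCrossingChain S m A B)
    (hB : Set.InjOn B (Set.Iio m)) :
    (Finset.range m).image B ⊆
      Finset.univ.filter (fun x => x ∉ S ∧ (w * swapProd A B m) x ≠ w x) := by
  simp only [Finset.image_subset_iff, Finset.mem_range, Finset.mem_filter, Finset.mem_univ,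
    true_and]
  intro i hi
  refine ⟨(h i hi).2, ?_⟩
  rw [h.mul_swapProd_final_apply_right hB hi, ← h.mul_swapProd_apply_right hB hi,
    (w * swapProd A B i).injective.ne_iff]
  exact h.left_ne_right h hi hi

lemma injOn_of_mul_swapProd_eq [Fintype α] (h : IsCrossingChain S m A B)
    (h' : IsCrossingChain S m A' B') (hB : Set.InjOn B (Set.Iio m))
    (hw : w * swapProd A B m = w * swapProd A' B' m) : Set.InjOn B' (Set.Iio m) := by
  rw [← Finset.coe_range, ← Finset.card_image_iff]
  refine le_antisymm Finset.card_image_le ?_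
  calc (Finset.range m).card
      = ((Finset.range m).image B).card := by
        rw [Finset.card_image_of_injOn (by rwa [Finset.coe_range])]
    _ ≤ _ := Finset.card_le_card (h.image_subset_filter hB)
    _ ≤ _ := Finset.card_le_card (hw ▸ h'.filter_subset_image)

lemma left_eq_of_right_eq (h : IsCrossingChain S m A B) (h' : IsCrossingChain S m A' B')
    (hB : Set.InjOn B (Set.Iio m)) (hB' : Set.InjOn B' (Set.Iio m))
    (hw : w * swapProd A B m = w * swapProd A' B' m) {i j : ℕ} (hi : i < m) (hj : j < m)
    (hij : B i = B' j) : A i = A' j := by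
  induction i using Nat.strong_induction_on generalizing j with
  | _ i IH =>
  have hv : (w * swapProd A B i) (A i) = (w * swapProd A' B' j) (A' j) := by
    rw [← h.mul_swapProd_final_apply_right hB hi, ← h'.mul_swapProd_final_apply_right hB' hj,
      hw, hij]
  rcases h.mul_swapProd_apply_of_mem hB hi.le (h i hi).1 with h₁ | ⟨i₀, hi₀, hA, h₁⟩ <;>
    rcases h'.mul_swapProd_apply_of_mem hB' hj.le (h' j hj).1 with h₂ | ⟨j₀, hj₀, hA', h₂⟩
  · exact w.injective (h₁.symm.trans (hv.trans h₂))
  · refine absurd (w.injective ?_) (h.left_ne_right h' hi (hj₀.trans hj))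
    rw [← h₁, hv, h₂]
  · refine absurd (w.injective ?_) (h'.left_ne_right h hj (hi₀.trans hi))
    rw [← h₂, ← hv, h₁]
  · rw [← hA, ← hA']
    refine IH i₀ hi₀ (hi₀.trans hi) (hj₀.trans hj) (w.injective ?_)
    rw [← h₁, hv, h₂]

lemma exists_eq_of_mul_swapProd_eq [Fintype α] (h : IsCrossingChain S m A B)
    (h' : IsCrossingChain S m A' B') (hB : Set.InjOn B (Set.Iio m))
    (hw : w * swapProd A B m = w * swapProd A' B' m) {i : ℕ} (hi : i < m) :
    ∃ j < m, A' j = A i ∧ B' j = B i := by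
  have hB' := h.injOn_of_mul_swapProd_eq h' hB hw
  obtain ⟨j, hj, hji⟩ := Finset.mem_image.mp <| h'.filter_subset_image <| hw ▸
    h.image_subset_filter hB (Finset.mem_image_of_mem B (Finset.mem_range.mpr hi))
  rw [Finset.mem_range] at hj
  exact ⟨j, hj, (h.left_eq_of_right_eq h' hB hB' hw hi hj hji.symm).symm, hji⟩

end IsCrossingChain

end SwapChain

lemma setOf_exists_lt_eq {β : Type*} {m : ℕ} {f g : ℕ → β}
    (hfg : ∀ i < m, ∃ j < m, g j = f i) (hgf : ∀ j < m, ∃ i < m, f i = g j) :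
    {x | ∃ i, i < m ∧ x = f i} = {x | ∃ i, i < m ∧ x = g i} := by
  ext x
  constructor
  · rintro ⟨i, hi, rfl⟩
    obtain ⟨j, hj, hji⟩ := hfg i hi
    exact ⟨j, hj, hji.symm⟩
  · rintro ⟨j, hj, rfl⟩
    obtain ⟨i, hi, hij⟩ := hgf j hj
    exact ⟨i, hi, hij.symm⟩

section Positions

variable {N k m : ℕ} [NeZero N] {a b a' b' : ℕ → ℕ} {w : Perm (Fin N)}

lemma pos_val_s19 {j : ℕ} (h₁ : 1 ≤ j) (h₂ : j ≤ N) : (pos N j : ℕ) = j - 1 :=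
  Nat.mod_eq_of_lt (by omega)

lemma pos_injOn : Set.InjOn (pos N) (Set.Icc 1 N) := fun x ⟨hx₁, hx₂⟩ y ⟨hy₁, hy₂⟩ hxy => by
  have := congrArg Fin.val hxy
  rw [pos_val_s19 hx₁ hx₂, pos_val_s19 hy₁ hy₂] at this
  omega

lemma tProd_eq_swapProd (a b : ℕ → ℕ) :
    tProd N a b = swapProd (fun i => pos N (a i)) (fun i => pos N (b i)) :=
  rfl

def Straddles (N k m : ℕ) (a b : ℕ → ℕ) : Prop :=
  ∀ i, i < m → 1 ≤ a i ∧ a i ≤ k ∧ k < b i ∧ b i ≤ N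

namespace Straddles

lemma isCrossingChain (h : Straddles N k m a b) :
    IsCrossingChain {p : Fin N | (p : ℕ) < k} m (fun i => pos N (a i)) (fun i => pos N (b i)) :=
  fun i hi => by
    obtain ⟨ha₁, ha₂, hb₁, hb₂⟩ := h i hi
    simp only [Set.mem_ofPred_eq, not_lt, pos_val_s19 ha₁ (ha₂.trans hb₁.le |>.trans hb₂),
      pos_val_s19 (by omega : 1 ≤ b i) hb₂]
    omega

lemma injOn_pos (h : Straddles N k m a b) (hb : Set.InjOn b (Set.Iio m)) :
    Set.InjOn (fun i => pos N (b i)) (Set.Iio m) := fun i hi j hj hij => by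
  obtain ⟨-, -, hi₁, hi₂⟩ := h i hi
  obtain ⟨-, -, hj₁, hj₂⟩ := h j hj
  exact hb hi hj (pos_injOn ⟨by omega, hi₂⟩ ⟨by omega, hj₂⟩ hij)

lemma exists_eq_of_mul_tProd_eq (h : Straddles N k m a b) (h' : Straddles N k m a' b')
    (hb : Set.InjOn (fun i => pos N (b i)) (Set.Iio m))
    (hw : w * tProd N a b m = w * tProd N a' b' m) :
    ∀ i < m, ∃ j < m, a' j = a i ∧ b' j = b i := by
  intro i hi
  obtain ⟨j, hj, ha, hb⟩ :=
    h.isCrossingChain.exists_eq_of_mul_swapProd_eq h'.isCrossingChain hb hw hi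
  obtain ⟨ha₁, ha₂, hb₁, hb₂⟩ := h i hi
  obtain ⟨ha₁', ha₂', hb₁', hb₂'⟩ := h' j hj
  exact ⟨j, hj, pos_injOn ⟨ha₁', by omega⟩ ⟨ha₁, by omega⟩ ha,
    pos_injOn ⟨by omega, hb₂'⟩ ⟨by omega, hb₂⟩ hb⟩

lemma label_eq_val (h : Straddles N k m a b)
    (hb : Set.InjOn (fun i => pos N (b i)) (Set.Iio m)) {i : ℕ} (hi : i < m) :
    label w a b i = val w (b i) := by
  rw [label, val, tProd_eq_swapProd, h.isCrossingChain.mul_swapProd_succ_apply_left hb hi, val]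

end Straddles

end Positions

theorem relR_witness_sets_unique_general (n k m : ℕ)
    (w w' : Equiv.Perm (Fin (n + 1)))
    (hrel : RelR (n + 1) k m w w')
    (a b a' b' : ℕ → ℕ)
    (h1 : StepOK (n + 1) k m w a b) (hw1 : w' = w * tProd (n + 1) a b m)
    (h2 : StepOK (n + 1) k m w a' b') (hw2 : w' = w * tProd (n + 1) a' b' m) :
    ({x : ℕ × ℕ | ∃ i, i < m ∧ x = (a i, b i)} =
      {x : ℕ × ℕ | ∃ i, i < m ∧ x = (a' i, b' i)}) ∧
    ({v : ℕ | ∃ i, i < m ∧ v = label w a b i} =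
      {v : ℕ | ∃ i, i < m ∧ v = label w a' b' i}) := by
  obtain ⟨a₀, b₀, h₀, hw₀, hb₀⟩ := hrel
  have s₀ : Straddles (n + 1) k m a₀ b₀ := h₀.1
  have s₁ : Straddles (n + 1) k m a b := h1.1
  have s₂ : Straddles (n + 1) k m a' b' := h2.1
  have hinj₀ := s₀.injOn_pos fun i hi j hj hij => by_contra fun hne => hb₀ i j hi hj hne hij
  have hinj₁ := s₀.isCrossingChain.injOn_of_mul_swapProd_eq s₁.isCrossingChain hinj₀
    (hw₀.symm.trans hw1)
  have hinj₂ := s₀.isCrossingChain.injOn_of_mul_swapProd_eq s₂.isCrossingChain hinj₀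
    (hw₀.symm.trans hw2)
  have h12 := s₁.exists_eq_of_mul_tProd_eq s₂ hinj₁ (hw1.symm.trans hw2)
  have h21 := s₂.exists_eq_of_mul_tProd_eq s₁ hinj₂ (hw2.symm.trans hw1)
  refine ⟨setOf_exists_lt_eq (fun i hi => ?_) (fun j hj => ?_),
    setOf_exists_lt_eq (fun i hi => ?_) (fun j hj => ?_)⟩
  · obtain ⟨j, hj, ha, hb⟩ := h12 i hi
    exact ⟨j, hj, by rw [ha, hb]⟩
  · obtain ⟨i, hi, ha, hb⟩ := h21 j hj
    exact ⟨i, hi, by rw [ha, hb]⟩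
  · obtain ⟨j, hj, -, hb⟩ := h12 i hi
    exact ⟨j, hj, by rw [s₂.label_eq_val hinj₂ hj, s₁.label_eq_val hinj₁ hi, hb]⟩
  · obtain ⟨i, hi, -, hb⟩ := h21 j hj
    exact ⟨i, hi, by rw [s₁.label_eq_val hinj₁ hi, s₂.label_eq_val hinj₂ hj, hb]⟩

/-- If `w →_{r[k,m]} w'`, then the set of transpositions and the set of intermediate
values do not depend on the witnessing sequence: any two sequences of
transpositions `t_{aᵢ,bᵢ}` with `aᵢ ≤ k < bᵢ` joining `w` to `w'` and increasing
length at each step use the same set of pairs `(aᵢ,bᵢ)` and produce the same set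
of values `(w t_{a₁,b₁} ⋯ t_{aᵢ,bᵢ})(aᵢ)` (here the paper's `n` is `n+1`). -/
theorem relR_witness_sets_unique (n k m : ℕ) (hk : 1 ≤ k) (hm : 1 ≤ m)
    (w w' : Equiv.Perm (Fin (n + 1)))
    (hrel : RelR (n + 1) k m w w')
    (a b a' b' : ℕ → ℕ)
    (h1 : StepOK (n + 1) k m w a b) (hw1 : w' = w * tProd (n + 1) a b m)
    (h2 : StepOK (n + 1) k m w a' b') (hw2 : w' = w * tProd (n + 1) a' b' m) :
    ({x : ℕ × ℕ | ∃ i, i < m ∧ x = (a i, b i)} =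
      {x : ℕ × ℕ | ∃ i, i < m ∧ x = (a' i, b' i)}) ∧
    ({v : ℕ | ∃ i, i < m ∧ v = label w a b i} =
      {v : ℕ | ∃ i, i < m ∧ v = label w a' b' i}) :=
  relR_witness_sets_unique_general n k m w w' hrel a b a' b' h1 hw1 h2 hw2

end SchubertPieri
end
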